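/- Let a, b, c be positive reals with c ≤ min(a, b) (c represents |V_A ∩ V_B| ≤ min(|V_A|,|V_B|)), and δ ≥ 1/2. If a > c · √a/√b (the NarSim correct-decision criterion S(v_A,v_A) > S(v_A,v_B) after multiplying through by √a), then a > c · (min(a/b, b/a))^δ (the BlbSim correct-decision criterion). -/

import Mathlib

/-! The balance factor `m = min (a/b) (b/a)` lies in `(0, 1]`, so raising it to an exponent
`δ ≥ 1/2` can only shrink it below `m ^ (1/2) ≤ (a/b) ^ (1/2) = √a / √b`. Hence the BlbSim score
of a mismatched pair never exceeds its NarSim score scaled by `√a`. -/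

lemma min_self_inv_le_one {K : Type*} [Field K] [LinearOrder K] [IsStrictOrderedRing K] (x : K) :
    min x x⁻¹ ≤ 1 := by
  rcases le_or_gt x 1 with hx | hx
  · exact min_le_of_left_le hx
  · exact min_le_of_right_le (inv_lt_one_of_one_lt₀ hx).le

lemma min_div_div_le_one {K : Type*} [Field K] [LinearOrder K] [IsStrictOrderedRing K] (a b : K) :
    min (a / b) (b / a) ≤ 1 := by
  simpa only [inv_div] using min_self_inv_le_one (a / b)

lemma min_div_div_rpow_le_sqrt_div {a b δ : ℝ} (ha : 0 < a) (hb : 0 < b) (hδ : 1 / 2 ≤ δ) :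
    min (a / b) (b / a) ^ δ ≤ Real.sqrt a / Real.sqrt b := by
  have hm : 0 < min (a / b) (b / a) := lt_min (div_pos ha hb) (div_pos hb ha)
  calc min (a / b) (b / a) ^ δ ≤ min (a / b) (b / a) ^ (1 / 2 : ℝ) :=
        Real.rpow_le_rpow_of_exponent_ge hm (min_div_div_le_one a b) hδ
    _ ≤ (a / b) ^ (1 / 2 : ℝ) := Real.rpow_le_rpow hm.le (min_le_left _ _) (by norm_num)
    _ = Real.sqrt a / Real.sqrt b := by rw [← Real.sqrt_eq_rpow, Real.sqrt_div ha.le]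

theorem stmt_4_general (a b c δ : ℝ) (ha : 0 < a) (hb : 0 < b) (hc : 0 < c)
    (hδ : 1/2 ≤ δ)
    (hNar : a > c * (Real.sqrt a / Real.sqrt b)) :
    a > c * (min (a / b) (b / a)) ^ δ :=
  calc c * min (a / b) (b / a) ^ δ ≤ c * (Real.sqrt a / Real.sqrt b) :=
        mul_le_mul_of_nonneg_left (min_div_div_rpow_le_sqrt_div ha hb hδ) hc.le
    _ < a := hNar

theorem stmt_4 (a b c δ : ℝ) (ha : 0 < a) (hb : 0 < b) (hc : 0 < c)
    (hcmin : c ≤ min a b) (hδ : 1/2 ≤ δ)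
    (hNar : a > c * (Real.sqrt a / Real.sqrt b)) :
    a > c * (min (a / b) (b / a)) ^ δ :=
  stmt_4_general a b c δ ha hb hc hδ hNar
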